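/- arXiv:0809.3815 — 2 statements merged into one kernel-verified Lean document; each statement's English description precedes it below -/
import Mathlib

section
/- Let A be an algebra in the language of the terms sᵢ, tᵢ and let (a,b,c,d,a₁,b₁,…,aₙ,bₙ) ∈ A^{4+2n}, X⃗ = (a,b,c,d,a₁,b₁,…,aₙ,bₙ). Then, in Con(A), Cg(a,b) ∨ ⋁_{i=1}^{n} Cg(aᵢ, tᵢ(a,b,c,d,a₁,b₁,…,a_{i−1},b_{i−1})) = Cg(X⃗, σ*(X⃗)). -/
set_option linter.unusedVariables false

namespace UA

/-- A purely functional first-order signature (language). -/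
structure Sig where
  ops : Type
  ar : ops → ℕ

/-- An algebra over a signature: a carrier together with interpretations of
the basic operations. -/
structure Alg (S : Sig) where
  carrier : Type
  interp : ∀ f : S.ops, (Fin (S.ar f) → carrier) → carrier

/-- Terms over a signature, with variables in `V`. -/
inductive Tm (S : Sig) (V : Type) : Type
  | var : V → Tm S V
  | app : ∀ f : S.ops, (Fin (S.ar f) → Tm S V) → Tm S V

/-- Evaluation of a term in an algebra, under an assignment of the variables. -/
def Tm.eval {S : Sig} {V : Type} (A : Alg S) (v : V → A.carrier) : Tm S V → A.carrier
  | .var i => v i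
  | .app f ts => A.interp f (fun i => Tm.eval A v (ts i))

/-- An algebra satisfies an identity (a universally quantified equation between
two terms in variables `ℕ`). -/
def Alg.satisfies {S : Sig} (A : Alg S) (e : Tm S ℕ × Tm S ℕ) : Prop :=
  ∀ v : ℕ → A.carrier, Tm.eval A v e.1 = Tm.eval A v e.2

/-- Membership in the variety axiomatized by the set of equations `E`. -/
def InV {S : Sig} (E : Set (Tm S ℕ × Tm S ℕ)) (A : Alg S) : Prop :=
  ∀ e ∈ E, A.satisfies e

/-- A congruence of an algebra: an equivalence relation compatible with all
basic operations. -/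
structure Con {S : Sig} (A : Alg S) where
  rel : A.carrier → A.carrier → Prop
  refl : ∀ a, rel a a
  symm : ∀ a b, rel a b → rel b a
  trans : ∀ a b c, rel a b → rel b c → rel a c
  compat : ∀ (f : S.ops) (ts us : Fin (S.ar f) → A.carrier),
      (∀ i, rel (ts i) (us i)) → rel (A.interp f ts) (A.interp f us)

/-- The trivial (equality) congruence Δ. -/
def conDelta {S : Sig} (A : Alg S) : Con A where
  rel a b := a = b
  refl _ := rfl
  symm _ _ h := h.symm
  trans _ _ _ h₁ h₂ := h₁.trans h₂
  compat f ts us h := congrArg (A.interp f) (funext h)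

/-- The total congruence ∇. -/
def conNabla {S : Sig} (A : Alg S) : Con A where
  rel _ _ := True
  refl _ := trivial
  symm _ _ _ := trivial
  trans _ _ _ _ _ := trivial
  compat _ _ _ _ := trivial

/-- The congruence generated by a set of pairs. -/
def cg {S : Sig} {A : Alg S} (s : Set (A.carrier × A.carrier)) : Con A where
  rel a b := ∀ θ : Con A, (∀ p ∈ s, θ.rel p.1 p.2) → θ.rel a b
  refl a := fun θ _ => θ.refl a
  symm _ _ h := fun θ hs => θ.symm _ _ (h θ hs)
  trans _ _ _ h₁ h₂ := fun θ hs => θ.trans _ _ _ (h₁ θ hs) (h₂ θ hs)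
  compat f ts us h := fun θ hs => θ.compat f ts us (fun i => h i θ hs)

/-- The principal congruence generated by a pair. -/
def cgPair {S : Sig} (A : Alg S) (a b : A.carrier) : Con A := cg {(a, b)}

/-- Meet (intersection) in the congruence lattice. -/
def Con.inf {S : Sig} {A : Alg S} (θ φ : Con A) : Con A where
  rel a b := θ.rel a b ∧ φ.rel a b
  refl a := ⟨θ.refl a, φ.refl a⟩
  symm _ _ h := ⟨θ.symm _ _ h.1, φ.symm _ _ h.2⟩
  trans _ _ _ h₁ h₂ := ⟨θ.trans _ _ _ h₁.1 h₂.1, φ.trans _ _ _ h₁.2 h₂.2⟩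
  compat f ts us h :=
    ⟨θ.compat f ts us fun i => (h i).1, φ.compat f ts us fun i => (h i).2⟩

/-- Join in the congruence lattice. -/
def Con.sup {S : Sig} {A : Alg S} (θ φ : Con A) : Con A :=
  cg {p | θ.rel p.1 p.2 ∨ φ.rel p.1 p.2}

/-- Join of a family in the congruence lattice. -/
def Con.iSup {S : Sig} {A : Alg S} {ι : Type} (f : ι → Con A) : Con A :=
  cg {p | ∃ i, (f i).rel p.1 p.2}

/-- Inclusion of congruences. -/
def conLE {S : Sig} {A : Alg S} (θ φ : Con A) : Prop := ∀ a b, θ.rel a b → φ.rel a b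

/-- Relational composition `r ∘ s`. -/
def relComp {α : Type} (r s : α → α → Prop) : α → α → Prop :=
  fun a b => ∃ c, r a c ∧ s c b

/-- `θ` and `θs` are complementary factor congruences: θ ∩ θ* = Δ and θ ∘ θ* = ∇. -/
def AreCompFC {S : Sig} {A : Alg S} (θ θs : Con A) : Prop :=
  (∀ a b, θ.rel a b → θs.rel a b → a = b) ∧ (∀ a b, relComp θ.rel θs.rel a b)

/-- The set of factor congruences of an algebra. -/
def FC {S : Sig} (A : Alg S) : Set (Con A) := {θ | ∃ θs, AreCompFC θ θs}

/-- `FC(A)` is a distributive sublattice of `Con(A)`. -/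
def HasBFC {S : Sig} (A : Alg S) : Prop :=
  (∀ θ φ, θ ∈ FC A → φ ∈ FC A → θ.inf φ ∈ FC A) ∧
  (∀ θ φ, θ ∈ FC A → φ ∈ FC A → θ.sup φ ∈ FC A) ∧
  (∀ θ φ ψ, θ ∈ FC A → φ ∈ FC A → ψ ∈ FC A →
    θ.inf (φ.sup ψ) = (θ.inf φ).sup (θ.inf ψ))

/-- The variety axiomatized by `E` has Boolean factor congruences. -/
def BFC {S : Sig} (E : Set (Tm S ℕ × Tm S ℕ)) : Prop :=
  ∀ A : Alg S, InV E A → HasBFC A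

/-- Direct product of two algebras. -/
def Alg.prod {S : Sig} (A B : Alg S) : Alg S where
  carrier := A.carrier × B.carrier
  interp f xs := (A.interp f (fun i => (xs i).1), B.interp f (fun i => (xs i).2))

/-- Direct product of a family of algebras. -/
def Alg.pi {S : Sig} {ι : Type} (A : ι → Alg S) : Alg S where
  carrier := ∀ i, (A i).carrier
  interp f xs i := (A i).interp f (fun j => (xs j) i)

/-- First-order formulas over a purely functional signature, with `k` free
variables (de Bruijn style: `all` binds a new last variable).  Negation,
conjunction, disjunction and existential quantification are definable from
`falsum`, `imp` and `all`, so this captures full first-order logic. -/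
inductive Fml (S : Sig) : ℕ → Type
  | eq {k : ℕ} : Tm S (Fin k) → Tm S (Fin k) → Fml S k
  | falsum {k : ℕ} : Fml S k
  | imp {k : ℕ} : Fml S k → Fml S k → Fml S k
  | all {k : ℕ} : Fml S (k + 1) → Fml S k

/-- Tarskian satisfaction of a first-order formula in an algebra. -/
def Fml.realize {S : Sig} (A : Alg S) : ∀ {k : ℕ}, Fml S k → (Fin k → A.carrier) → Prop
  | _, .eq t u, v => Tm.eval A v t = Tm.eval A v u
  | _, .falsum, _ => False
  | _, .imp f g, v => Fml.realize A f v → Fml.realize A g v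
  | _, .all f, v => ∀ a : A.carrier, Fml.realize A f (Fin.snoc v a)

/-- A formula is preserved by direct products. -/
def PreservedByProducts {S : Sig} {l : ℕ} (φ : Fml S l) : Prop :=
  ∀ (ι : Type) (A : ι → Alg S) (v : Fin l → (Alg.pi A).carrier),
    (∀ i, φ.realize (A i) (fun m => v m i)) → φ.realize (Alg.pi A) v

/-- A formula is preserved by direct factors. -/
def PreservedByFactors {S : Sig} {l : ℕ} (φ : Fml S l) : Prop :=
  ∀ (A B : Alg S) (v : Fin l → (A.prod B).carrier),
    φ.realize (A.prod B) v →
      φ.realize A (fun m => (v m).1) ∧ φ.realize B (fun m => (v m).2)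

/-! ### Tuples `(x, y, z, w, x₁, y₁, …, xₙ, yₙ)` and the maps σ, σ*, ρ, ρ* -/

/-- The tuple `(x, y, z, w, x₁, y₁, x₂, y₂, …)` as an assignment of variables:
variable `0 ↦ x`, `1 ↦ y`, `2 ↦ z`, `3 ↦ w`, `4 + 2m ↦ xs m`, `5 + 2m ↦ ys m`. -/
def tup {α : Type} (x y z w : α) (xs ys : ℕ → α) : ℕ → α
  | 0 => x
  | 1 => y
  | 2 => z
  | 3 => w
  | m + 4 => if m % 2 = 0 then xs (m / 2) else ys (m / 2)

/-- Extend a tuple `Fin n → α` to all of `ℕ` by a default value. -/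
def extN {α : Type} {n : ℕ} (dflt : α) (f : Fin n → α) : ℕ → α :=
  fun m => if h : m < n then f ⟨m, h⟩ else dflt

/-- Evaluate a term of arity `m` at (the first `m` entries of) a tuple. -/
def evalAt {S : Sig} (A : Alg S) {m : ℕ} (u : Tm S (Fin m)) (X : ℕ → A.carrier) :
    A.carrier :=
  Tm.eval A (fun i => X i.val) u

/-- The set of pairs of corresponding components of two tuples of length `len`;
`Cg(X⃗, Y⃗)` is `cg (tupPairs X Y len)`. -/
def tupPairs {α : Type} (X Y : ℕ → α) (len : ℕ) : Set (α × α) :=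
  {p | ∃ m, m < len ∧ p = (X m, Y m)}

/-- The recursively computed `x`-row: `row j = (u j)(h1,h2,h3,h4,row 0,ys 0,…,
row (j-1), ys (j-1))`.  `recRowX A u h1 h2 h3 h4 ys j m` is the value of the row
at index `m`, computed after `j` recursion steps (only the values at `m < j`
are meaningful; later steps never change them). -/
def recRowX {S : Sig} (A : Alg S) {n : ℕ} (u : ∀ j : Fin n, Tm S (Fin (4 + 2 * j.val)))
    (h1 h2 h3 h4 : A.carrier) (ys : ℕ → A.carrier) : ℕ → ℕ → A.carrier
  | 0, _ => h1
  | j + 1, m =>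
    if m = j then
      if h : j < n then
        Tm.eval A (fun i => tup h1 h2 h3 h4 (recRowX A u h1 h2 h3 h4 ys j) ys i.val)
          (u ⟨j, h⟩)
      else h1
    else recRowX A u h1 h2 h3 h4 ys j m

/-- The recursively computed `y`-row (the `x`-row being fixed). -/
def recRowY {S : Sig} (A : Alg S) {n : ℕ} (u : ∀ j : Fin n, Tm S (Fin (4 + 2 * j.val)))
    (h1 h2 h3 h4 : A.carrier) (xs : ℕ → A.carrier) : ℕ → ℕ → A.carrier
  | 0, _ => h1
  | j + 1, m =>
    if m = j then
      if h : j < n then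
        Tm.eval A (fun i => tup h1 h2 h3 h4 xs (recRowY A u h1 h2 h3 h4 xs j) i.val)
          (u ⟨j, h⟩)
      else h1
    else recRowY A u h1 h2 h3 h4 xs j m

/-- The tuple `σ(X⃗)`: heads `(x, y, x, y)`, `y`-row unchanged, `x`-row computed
recursively by the terms `s`. -/
def sigmaT {S : Sig} (A : Alg S) {n : ℕ} (s : ∀ j : Fin n, Tm S (Fin (4 + 2 * j.val)))
    (x y z w : A.carrier) (xs ys : ℕ → A.carrier) : ℕ → A.carrier :=
  tup x y x y (recRowX A s x y x y ys n) ys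

/-- The tuple `σ*(X⃗)`: heads `(x, x, z, w)`, `y`-row unchanged, `x`-row computed
recursively by the terms `t`. -/
def sigmaStarT {S : Sig} (A : Alg S) {n : ℕ} (t : ∀ j : Fin n, Tm S (Fin (4 + 2 * j.val)))
    (x y z w : A.carrier) (xs ys : ℕ → A.carrier) : ℕ → A.carrier :=
  tup x x z w (recRowX A t x x z w ys n) ys

/-- The tuple `ρ(X⃗)`: heads `(x, y, z, z)`, `x`-row unchanged, `y`-row computed
recursively by the terms `s`. -/
def rhoT {S : Sig} (A : Alg S) {n : ℕ} (s : ∀ j : Fin n, Tm S (Fin (4 + 2 * j.val)))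
    (x y z w : A.carrier) (xs ys : ℕ → A.carrier) : ℕ → A.carrier :=
  tup x y z z xs (recRowY A s x y z z xs n)

/-- The tuple `ρ*(X⃗)`: heads `(x, y, z, w)`, `x`-row unchanged, `y`-row computed
recursively by the terms `t`. -/
def rhoStarT {S : Sig} (A : Alg S) {n : ℕ} (t : ∀ j : Fin n, Tm S (Fin (4 + 2 * j.val)))
    (x y z w : A.carrier) (xs ys : ℕ → A.carrier) : ℕ → A.carrier :=
  tup x y z w xs (recRowY A t x y z w xs n)

/-- The pair of relations `(δ_m, ε_m)` determined by congruences θ, θ*, φ, φ*: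
`δ₀ = ε₀ = Δ`, `δ_{m+1} = (θ ∘ ε_m) ∩ (θ* ∘ ε_m)`,
`ε_{m+1} = (φ ∘ δ_m) ∩ (φ* ∘ δ_m)`. -/
def deltaEps {S : Sig} {A : Alg S} (θ θs φ φs : Con A) :
    ℕ → (A.carrier → A.carrier → Prop) × (A.carrier → A.carrier → Prop)
  | 0 => (Eq, Eq)
  | m + 1 =>
    let p := deltaEps θ θs φ φs m
    (fun a b => relComp θ.rel p.2 a b ∧ relComp θs.rel p.2 a b,
     fun a b => relComp φ.rel p.1 a b ∧ relComp φs.rel p.1 a b)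

/-- Willard's congruence-theoretic condition (Corollary on Willard terms): for
every algebra in the variety, all congruences θ, θ*, φ, φ* and every tuple, if
`Cg(X⃗,σ(X⃗)) ⊆ θ`, `Cg(X⃗,σ*(X⃗)) ⊆ θ*`, `Cg(X⃗,ρ(X⃗)) ⊆ φ` and
`Cg(X⃗,ρ*(X⃗)) ⊆ φ*` then `(x, y) ∈ φ ∘ δ_N`. -/
def MalcevRelCondition {S : Sig} (E : Set (Tm S ℕ × Tm S ℕ)) (N n : ℕ)
    (s t : ∀ j : Fin n, Tm S (Fin (4 + 2 * j.val))) : Prop :=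
  ∀ A : Alg S, InV E A → ∀ θ θs φ φs : Con A,
    ∀ x y z w : A.carrier, ∀ xs ys : Fin n → A.carrier,
      conLE (cg (tupPairs (tup x y z w (extN x xs) (extN x ys))
        (sigmaT A s x y z w (extN x xs) (extN x ys)) (4 + 2 * n))) θ →
      conLE (cg (tupPairs (tup x y z w (extN x xs) (extN x ys))
        (sigmaStarT A t x y z w (extN x xs) (extN x ys)) (4 + 2 * n))) θs →
      conLE (cg (tupPairs (tup x y z w (extN x xs) (extN x ys))
        (rhoT A s x y z w (extN x xs) (extN x ys)) (4 + 2 * n))) φ →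
      conLE (cg (tupPairs (tup x y z w (extN x xs) (extN x ys))
        (rhoStarT A t x y z w (extN x xs) (extN x ys)) (4 + 2 * n))) φs →
      relComp φ.rel (deltaEps θ θs φ φs N).1 x y

/-! ### The Mal'cev condition for BFC: words and the terms `L_α`, `R_α` -/

/-- A word over the alphabet `{1, …, N}`. -/
def IsWord (N : ℕ) (α : List ℕ) : Prop := ∀ j ∈ α, 1 ≤ j ∧ j ≤ N

/-- The chain of identities associated with a word `α` (with `N = 2k`) and a
pair of tuples `Y` and `Ys` (which will be `ρ(X⃗), ρ*(X⃗)` or `σ(X⃗), σ*(X⃗)`). -/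
def ChainCond {S : Sig} (A : Alg S) {n : ℕ} (k : ℕ)
    (L R : List ℕ → Tm S (Fin (4 + 2 * n))) (α : List ℕ)
    (Y Ys : ℕ → A.carrier) : Prop :=
  evalAt A (L α) Y = evalAt A (L (α ++ [1])) Y ∧
  (∀ j, 1 ≤ j → j ≤ k - 1 →
    evalAt A (R (α ++ [j])) Y = evalAt A (L (α ++ [j + 1])) Y) ∧
  evalAt A (R (α ++ [k])) Y = evalAt A (R α) Y ∧
  evalAt A (L α) Ys = evalAt A (L (α ++ [k + 1])) Ys ∧
  (∀ j, k + 1 ≤ j → j ≤ 2 * k - 1 →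
    evalAt A (R (α ++ [j])) Ys = evalAt A (L (α ++ [j + 1])) Ys) ∧
  evalAt A (R (α ++ [2 * k])) Ys = evalAt A (R α) Ys

/-- `(N = 2k, n, s, t, L, R)` witness the BFC Mal'cev condition for the variety
axiomatized by `E`. -/
def MalcevWitness {S : Sig} (E : Set (Tm S ℕ × Tm S ℕ)) (k n : ℕ)
    (s t : ∀ j : Fin n, Tm S (Fin (4 + 2 * j.val)))
    (L R : List ℕ → Tm S (Fin (4 + 2 * n))) : Prop :=
  0 < k ∧ 0 < n ∧
  ∀ A : Alg S, InV E A → ∀ (x y z w : A.carrier) (xs ys : ℕ → A.carrier),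
    (∀ α : List ℕ, IsWord (2 * k) α → α.length = 2 * k →
      evalAt A (L α) (rhoT A s x y z w xs ys) =
        evalAt A (R α) (rhoT A s x y z w xs ys) ∧
      evalAt A (L α) (rhoStarT A t x y z w xs ys) =
        evalAt A (R α) (rhoStarT A t x y z w xs ys)) ∧
    (x = evalAt A (L []) (tup x y z w xs ys)) ∧
    (y = evalAt A (R []) (tup x y z w xs ys)) ∧
    (evalAt A (L []) (rhoT A s x y z w xs ys) =
      evalAt A (L [1]) (rhoT A s x y z w xs ys)) ∧
    (∀ j, 1 ≤ j → j ≤ 2 * k - 1 →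
      evalAt A (R [j]) (rhoT A s x y z w xs ys) =
        evalAt A (L [j + 1]) (rhoT A s x y z w xs ys)) ∧
    (evalAt A (R [2 * k]) (rhoT A s x y z w xs ys) =
      evalAt A (R []) (rhoT A s x y z w xs ys)) ∧
    (∀ α : List ℕ, IsWord (2 * k) α → α ≠ [] → α.length < 2 * k →
      α.length % 2 = 0 →
      ChainCond A k L R α (rhoT A s x y z w xs ys) (rhoStarT A t x y z w xs ys)) ∧
    (∀ α : List ℕ, IsWord (2 * k) α → α ≠ [] → α.length < 2 * k →
      α.length % 2 = 1 →
      ChainCond A k L R α (sigmaT A s x y z w xs ys) (sigmaStarT A t x y z w xs ys))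

/-! ### The formulas Ψ_m, Φ₁ and Φ₂ -/

/-- Alternating quantifier prefix `∃ u₁ ∀ v₁ … ∃ uₘ ∀ vₘ, P [u₁, v₁, …, uₘ, vₘ]`
(the accumulator collects the quantified elements in order). -/
def altQ {α : Type} (P : List α → Prop) : ℕ → List α → Prop
  | 0, acc => P acc
  | m + 1, acc => ∃ u : α, ∀ v : α, altQ P m (acc ++ [u, v])

/-- The (realization of the) formula `Ψ_m`: for every word `α` of length `m`,
if `L_{αγ} = R_{αγ}` for all nonempty `γ` with `|αγ| ≤ N`, then `L_α = R_α`. -/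
def Psi {S : Sig} (A : Alg S) {n : ℕ} (N : ℕ)
    (L R : List ℕ → Tm S (Fin (4 + 2 * n))) (m : ℕ) (X : ℕ → A.carrier) : Prop :=
  ∀ α : List ℕ, IsWord N α → α.length = m →
    ((∀ γ : List ℕ, IsWord N γ → γ ≠ [] → (α ++ γ).length ≤ N →
        evalAt A (L (α ++ γ)) X = evalAt A (R (α ++ γ)) X) →
      evalAt A (L α) X = evalAt A (R α) X)

/-- Realization of `Φ₁(x,y,z,w) = ∃y₁∀x₁ ⋯ ∃yₙ∀xₙ ⋀_{m=1}^{k} Ψ_{2m}`. -/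
def Phi1 {S : Sig} (A : Alg S) (k n : ℕ)
    (L R : List ℕ → Tm S (Fin (4 + 2 * n))) (x y z w : A.carrier) : Prop :=
  altQ (fun acc =>
    ∀ m, 1 ≤ m → m ≤ k →
      Psi A (2 * k) L R (2 * m)
        (tup x y z w (fun i => acc.getD (2 * i + 1) x) (fun i => acc.getD (2 * i) x)))
    n []

/-- Realization of `Φ₂(x,y,z,w) = ∃x₁∀y₁ ⋯ ∃xₙ∀yₙ ⋀_{m=1}^{k} Ψ_{2m-1}`. -/
def Phi2 {S : Sig} (A : Alg S) (k n : ℕ)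
    (L R : List ℕ → Tm S (Fin (4 + 2 * n))) (x y z w : A.carrier) : Prop :=
  altQ (fun acc =>
    ∀ m, 1 ≤ m → m ≤ k →
      Psi A (2 * k) L R (2 * m - 1)
        (tup x y z w (fun i => acc.getD (2 * i) x) (fun i => acc.getD (2 * i + 1) x)))
    n []

/-- `Γ^A(a,b,c,d)`: every factor congruence containing `(c,d)` contains `(a,b)`. -/
def Gamma {S : Sig} (A : Alg S) (a b c d : A.carrier) : Prop :=
  ∀ θ ∈ FC A, θ.rel c d → θ.rel a b


section AuxStatement2

variable {S : Sig} {A : Alg S}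

theorem conExt {θ φ : Con A} (h : θ.rel = φ.rel) : θ = φ := by
  cases θ; cases φ; cases h; rfl

theorem cg_rel_of_mem {s : Set (A.carrier × A.carrier)} {a b : A.carrier}
    (h : (a, b) ∈ s) : (cg s).rel a b := fun θ hs => hs (a, b) h

theorem eval_rel (θ : Con A) {V : Type} {v w : V → A.carrier}
    (h : ∀ i, θ.rel (v i) (w i)) : ∀ u : Tm S V, θ.rel (Tm.eval A v u) (Tm.eval A w u)
  | .var i => h i
  | .app f ts => θ.compat f _ _ fun i => eval_rel θ h (ts i)

theorem rel_tup (θ : Con A) {x x' y y' z z' w w' : A.carrier}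
    {xs xs' ys ys' : ℕ → A.carrier} {K : ℕ}
    (hx : θ.rel x x') (hy : θ.rel y y') (hz : θ.rel z z') (hw : θ.rel w w')
    (hxs : ∀ k, k < K → θ.rel (xs k) (xs' k))
    (hys : ∀ k, k < K → θ.rel (ys k) (ys' k)) :
    ∀ m, m < 4 + 2 * K → θ.rel (tup x y z w xs ys m) (tup x' y' z' w' xs' ys' m)
  | 0, _ => hx
  | 1, _ => hy
  | 2, _ => hz
  | 3, _ => hw
  | (m+4), hm => by
      simp only [tup]
      split
      · exact hxs (m/2) (by omega)
      · next h =>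
        exact hys (m/2) (by omega)

theorem recRowX_stable {n : ℕ} (u : ∀ j : Fin n, Tm S (Fin (4 + 2 * j.val)))
    (h1 h2 h3 h4 : A.carrier) (ys : ℕ → A.carrier) :
    ∀ j j' m, m < j → j ≤ j' →
      recRowX A u h1 h2 h3 h4 ys j' m = recRowX A u h1 h2 h3 h4 ys j m := by
  intro j j' m hm hj
  induction j' with
  | zero => omega
  | succ j' ih =>
    rcases Nat.eq_or_lt_of_le hj with h | h
    · rw [h]
    · have hj' : j ≤ j' := by omega
      have hne : m ≠ j' := by omega
      simp only [recRowX, if_neg hne]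
      exact ih hj'

theorem recRowX_ge {n : ℕ} (u : ∀ j : Fin n, Tm S (Fin (4 + 2 * j.val)))
    (h1 h2 h3 h4 : A.carrier) (ys : ℕ → A.carrier) :
    ∀ j m, j ≤ m → recRowX A u h1 h2 h3 h4 ys j m = h1
  | 0, m, _ => rfl
  | j+1, m, h => by
      have hne : m ≠ j := by omega
      simp only [recRowX, if_neg hne]
      exact recRowX_ge u h1 h2 h3 h4 ys j m (by omega)

theorem tup_congr {α : Type} (x y z w : α) (xs xs' ys : ℕ → α) {B : ℕ}
    (h : ∀ k, k < B → xs k = xs' k) :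
    ∀ m, m < 4 + 2 * B → tup x y z w xs ys m = tup x y z w xs' ys m
  | 0, _ => rfl
  | 1, _ => rfl
  | 2, _ => rfl
  | 3, _ => rfl
  | m+4, hm => by
      simp only [tup]
      split
      · exact h (m/2) (by omega)
      · rfl

theorem tup_even {α : Type} (x y z w : α) (xs ys : ℕ → α) (k : ℕ) :
    tup x y z w xs ys (2*k+4) = xs k := by
  simp only [tup]
  rw [if_pos (by omega : (2*k) % 2 = 0)]
  congr 1
  omega

theorem recRowX_spec {n : ℕ} (u : ∀ j : Fin n, Tm S (Fin (4 + 2 * j.val)))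
    (h1 h2 h3 h4 : A.carrier) (ys : ℕ → A.carrier) {i : ℕ} (hi : i < n) :
    recRowX A u h1 h2 h3 h4 ys n i =
      Tm.eval A (fun v : Fin (4 + 2 * i) =>
        tup h1 h2 h3 h4 (recRowX A u h1 h2 h3 h4 ys n) ys v.val) (u ⟨i, hi⟩) := by
  have h0 : recRowX A u h1 h2 h3 h4 ys n i = recRowX A u h1 h2 h3 h4 ys (i+1) i :=
    recRowX_stable u h1 h2 h3 h4 ys (i+1) n i (by omega) hi
  rw [h0]
  simp only [recRowX, if_pos rfl, dif_pos hi, if_true]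
  congr 1
  funext v
  exact tup_congr h1 h2 h3 h4 _ _ ys
    (fun k hk => (recRowX_stable u h1 h2 h3 h4 ys i n k hk (le_of_lt hi)).symm)
    v.val v.isLt

end AuxStatement2

/-- **Lemma (second identity).**  `Cg(a,b) ∨ ⋁ᵢ Cg(aᵢ, tᵢ(a,b,c,d,a₁,b₁,…,a_{i-1},b_{i-1}))
= Cg(X⃗, σ*(X⃗))` in `Con(A)`. -/
theorem statement2 {S : Sig} (A : Alg S) (n : ℕ) (hn : 1 ≤ n)
    (s t : ∀ j : Fin n, Tm S (Fin (4 + 2 * j.val)))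
    (a b c d : A.carrier) (ai bi : Fin n → A.carrier) :
    Con.sup (cgPair A a b)
      (Con.iSup (fun i : Fin n =>
        cgPair A (ai i)
          (evalAt A (t i) (tup a b c d (extN a ai) (extN a bi))))) =
    cg (tupPairs (tup a b c d (extN a ai) (extN a bi))
        (sigmaStarT A t a b c d (extN a ai) (extN a bi)) (4 + 2 * n)) := by
  classical
  set ys : ℕ → A.carrier := extN a bi with hysdef
  set xsv : ℕ → A.carrier := extN a ai with hxsdef
  set X : ℕ → A.carrier := tup a b c d xsv ys with hXdef
  set row : ℕ → A.carrier := recRowX A t a a c d ys n with hrowdef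
  set Y : ℕ → A.carrier := sigmaStarT A t a b c d xsv ys with hYdef
  have hYeq : Y = tup a a c d row ys := rfl
  set θR : Con A := cg (tupPairs X Y (4 + 2 * n)) with hθRdef
  set θL : Con A :=
    Con.sup (cgPair A a b)
      (Con.iSup (fun i : Fin n => cgPair A (ai i) (evalAt A (t i) X))) with hθLdef
  -- facts about θR
  have hXb : X 1 = b := rfl
  have hYa : Y 1 = a := rfl
  have hba : θR.rel b a := cg_rel_of_mem ⟨1, by omega, rfl⟩
  have hab : θR.rel a b := θR.symm _ _ hba
  have hxsval : ∀ k (hk : k < n), xsv k = ai ⟨k, hk⟩ := by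
    intro k hk; rw [hxsdef]; exact dif_pos hk
  have hgenrow : ∀ k (hk : k < n), θR.rel (xsv k) (row k) := by
    intro k hk
    refine cg_rel_of_mem ⟨2*k+4, by omega, ?_⟩
    have h1 : X (2*k+4) = xsv k := tup_even a b c d xsv ys k
    have h2 : Y (2*k+4) = row k := tup_even a a c d row ys k
    rw [h1, h2]
  have hTrow : ∀ k (hk : k < n), θR.rel (evalAt A (t ⟨k, hk⟩) X) (row k) := by
    intro k hk
    have hspec : row k =
        Tm.eval A (fun v : Fin (4 + 2 * k) => tup a a c d row ys v.val) (t ⟨k, hk⟩) :=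
      recRowX_spec t a a c d ys hk
    rw [hspec]
    exact eval_rel θR
      (fun v : Fin (4 + 2 * k) => rel_tup θR (θR.refl a) hba (θR.refl c) (θR.refl d)
        (fun k' hk' => hgenrow k' (lt_trans hk' hk))
        (fun k' _ => θR.refl (ys k')) v.val v.isLt) _
  have hRgen2 : ∀ k (hk : k < n), θR.rel (ai ⟨k, hk⟩) (evalAt A (t ⟨k, hk⟩) X) := by
    intro k hk
    have h1 := hgenrow k hk
    rw [hxsval k hk] at h1
    exact θR.trans _ _ _ h1 (θR.symm _ _ (hTrow k hk))
  -- facts about θL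
  have hLab : θL.rel a b := by
    apply cg_rel_of_mem
    exact Or.inl (cg_rel_of_mem (Set.mem_singleton _))
  have hLgen : ∀ k (hk : k < n), θL.rel (ai ⟨k, hk⟩) (evalAt A (t ⟨k, hk⟩) X) := by
    intro k hk
    apply cg_rel_of_mem
    exact Or.inr (cg_rel_of_mem ⟨⟨k, hk⟩, cg_rel_of_mem (Set.mem_singleton _)⟩)
  have hLrow : ∀ k, θL.rel (xsv k) (row k) := by
    intro k
    induction k using Nat.strong_induction_on with
    | _ k ih =>
      by_cases hk : k < n
      · have h1 : θL.rel (xsv k) (evalAt A (t ⟨k, hk⟩) X) := by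
          rw [hxsval k hk]; exact hLgen k hk
        have hspec : row k =
            Tm.eval A (fun v : Fin (4 + 2 * k) => tup a a c d row ys v.val)
              (t ⟨k, hk⟩) := recRowX_spec t a a c d ys hk
        have h2 : θL.rel (evalAt A (t ⟨k, hk⟩) X) (row k) := by
          rw [hspec]
          exact eval_rel θL
            (fun v : Fin (4 + 2 * k) => rel_tup θL (θL.refl a) (θL.symm _ _ hLab) (θL.refl c)
              (θL.refl d) (fun k' hk' => ih k' hk')
              (fun k' _ => θL.refl (ys k')) v.val v.isLt) _
        exact θL.trans _ _ _ h1 h2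
      · have e1 : xsv k = a := by rw [hxsdef]; exact dif_neg hk
        have e2 : row k = a := by
          rw [hrowdef]; exact recRowX_ge t a a c d ys n k (by omega)
        rw [e1, e2]; exact θL.refl a
  -- conclude
  refine conExt (funext fun p => funext fun q => propext ⟨?_, ?_⟩)
  · intro h
    refine h θR ?_
    rintro pr (h1 | h2)
    · exact h1 θR (by rintro r hr; rw [Set.mem_singleton_iff] at hr; subst hr; exact hab)
    · refine h2 θR ?_
      rintro r ⟨i, hi⟩
      exact hi θR (by
        rintro r' hr'; rw [Set.mem_singleton_iff] at hr'; subst hr'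
        exact hRgen2 i.val i.isLt)
  · intro h
    refine h θL ?_
    rintro pr ⟨m, hm, hpr⟩
    subst hpr
    show θL.rel (X m) (Y m)
    exact rel_tup θL (θL.refl a) (θL.symm _ _ hLab) (θL.refl c) (θL.refl d)
      (fun k _ => hLrow k) (fun k _ => θL.refl (ys k)) m hm

end UA
end

section
/- Let A be an algebra in the language of the terms sᵢ, tᵢ and let (a,b,c,d,a₁,b₁,…,aₙ,bₙ) ∈ A^{4+2n}, X⃗ = (a,b,c,d,a₁,b₁,…,aₙ,bₙ). Then, in Con(A), Cg(c,d) ∨ ⋁_{i=1}^{n} Cg(bᵢ, sᵢ(a,b,c,d,a₁,b₁,…,a_{i−1},b_{i−1})) = Cg(X⃗, ρ(X⃗)). -/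
set_option linter.unusedVariables false

namespace UA

/-- Extensionality for congruences. -/
lemma Con.ext' {S : Sig} {A : Alg S} {θ φ : Con A} (h : θ.rel = φ.rel) : θ = φ := by
  cases θ; cases φ; cases h; rfl

/-- Term evaluation respects congruences. -/
lemma evalCong {S : Sig} {A : Alg S} (ψ : Con A) {V : Type} (u : Tm S V)
    (v w : V → A.carrier) (h : ∀ i, ψ.rel (v i) (w i)) :
    ψ.rel (Tm.eval A v u) (Tm.eval A w u) := by
  induction u with
  | var i => exact h i
  | app f ts ih => exact ψ.compat f _ _ (fun i => ih i)

lemma tup_add4 {α : Type} (x y z w : α) (xs ys : ℕ → α) (m : ℕ) :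
    tup x y z w xs ys (m + 4) = if m % 2 = 0 then xs (m / 2) else ys (m / 2) := rfl

lemma tup_odd {α : Type} (x y z w : α) (xs ys : ℕ → α) (m : ℕ) :
    tup x y z w xs ys (2 * m + 5) = ys m := by
  have h : 2 * m + 5 = (2 * m + 1) + 4 := by omega
  rw [h, tup_add4]
  have h1 : (2 * m + 1) % 2 = 1 := by omega
  have h2 : (2 * m + 1) / 2 = m := by omega
  simp [h1, h2]

lemma tup_rel {S : Sig} {A : Alg S} {R : A.carrier → A.carrier → Prop}
    {x y z w x' y' z' w' : A.carrier} {xs ys xs' ys' : ℕ → A.carrier} (j : ℕ)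
    (h0 : R x x') (h1 : R y y') (h2 : R z z') (h3 : R w w')
    (hx : ∀ m, R (xs m) (xs' m)) (hy : ∀ m, m < j → R (ys m) (ys' m)) :
    ∀ i, i < 4 + 2 * j → R (tup x y z w xs ys i) (tup x' y' z' w' xs' ys' i) := by
  intro i hi
  match i with
  | 0 => exact h0
  | 1 => exact h1
  | 2 => exact h2
  | 3 => exact h3
  | (m : ℕ) + 4 =>
    rw [tup_add4, tup_add4]
    by_cases hp : m % 2 = 0
    · simp only [hp, if_pos]; exact hx _
    · simp only [hp, if_neg, reduceIte]; exact hy _ (by omega)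

lemma recRowY_frozen {S : Sig} {A : Alg S} {n : ℕ}
    (u : ∀ j : Fin n, Tm S (Fin (4 + 2 * j.val)))
    (h1 h2 h3 h4 : A.carrier) (xs : ℕ → A.carrier) (j m : ℕ) (hm : m < j) :
    ∀ j', j ≤ j' → recRowY A u h1 h2 h3 h4 xs j' m = recRowY A u h1 h2 h3 h4 xs j m := by
  intro j'
  induction j' with
  | zero => intro h; omega
  | succ k ih =>
    intro h
    rcases Nat.lt_or_ge k j with hk | hk
    · have : j = k + 1 := by omega
      subst this; rfl
    · have hne : m ≠ k := by omega
      rw [recRowY, if_neg hne, ih hk]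

lemma recRowY_eq {S : Sig} {A : Alg S} {n : ℕ}
    (u : ∀ j : Fin n, Tm S (Fin (4 + 2 * j.val)))
    (h1 h2 h3 h4 : A.carrier) (xs : ℕ → A.carrier) (m : ℕ) (hm : m < n) :
    recRowY A u h1 h2 h3 h4 xs n m =
      Tm.eval A (fun i => tup h1 h2 h3 h4 xs (recRowY A u h1 h2 h3 h4 xs m) i.val)
        (u ⟨m, hm⟩) := by
  rw [recRowY_frozen u h1 h2 h3 h4 xs (m + 1) m (Nat.lt_succ_self m) n hm]
  rw [recRowY, if_pos rfl, dif_pos hm]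

/-- Key step: the evaluated term `s_j` is congruent to the recursively computed
`y`-row entry, modulo a congruence relating `d ~ c` and previous `y` entries. -/
lemma key_step {S : Sig} {A : Alg S} {n : ℕ}
    (s : ∀ j : Fin n, Tm S (Fin (4 + 2 * j.val)))
    (a b c d : A.carrier) (xs ys : ℕ → A.carrier)
    (ψ : Con A) (hdc : ψ.rel d c) (j : ℕ) (hj : j < n)
    (hy : ∀ m, m < j → ψ.rel (ys m) (recRowY A s a b c c xs n m)) :
    ψ.rel (Tm.eval A (fun i => tup a b c d xs ys i.val) (s ⟨j, hj⟩))
      (recRowY A s a b c c xs n j) := by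
  rw [recRowY_eq s a b c c xs j hj]
  apply evalCong
  intro i
  refine tup_rel j (ψ.refl a) (ψ.refl b) (ψ.refl c) hdc (fun m => ψ.refl _)
    (fun m hm => ?_) i.val i.isLt
  rw [show recRowY A s a b c c xs j m = recRowY A s a b c c xs n m from
    (recRowY_frozen s a b c c xs j m hm n (le_of_lt hj)).symm]
  exact hy m hm

/-- **Lemma (third identity).**  `Cg(c,d) ∨ ⋁ᵢ Cg(bᵢ, sᵢ(a,b,c,d,a₁,b₁,…,a_{i-1},b_{i-1}))
= Cg(X⃗, ρ(X⃗))` in `Con(A)`. -/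
theorem statement3 {S : Sig} (A : Alg S) (n : ℕ) (hn : 1 ≤ n)
    (s t : ∀ j : Fin n, Tm S (Fin (4 + 2 * j.val)))
    (a b c d : A.carrier) (ai bi : Fin n → A.carrier) :
    Con.sup (cgPair A c d)
      (Con.iSup (fun i : Fin n =>
        cgPair A (bi i)
          (evalAt A (s i) (tup a b c d (extN a ai) (extN a bi))))) =
    cg (tupPairs (tup a b c d (extN a ai) (extN a bi))
        (rhoT A s a b c d (extN a ai) (extN a bi)) (4 + 2 * n)) := by
  classical
  set X : ℕ → A.carrier := tup a b c d (extN a ai) (extN a bi) with hX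
  set Yrow : ℕ → A.carrier := recRowY A s a b c c (extN a ai) n with hYrow
  have hrho : rhoT A s a b c d (extN a ai) (extN a bi) =
      tup a b c c (extN a ai) Yrow := rfl
  have hX3 : X 3 = d := rfl
  have hrho3 : rhoT A s a b c d (extN a ai) (extN a bi) 3 = c := rfl
  have hXodd : ∀ m, X (2 * m + 5) = extN a bi m := fun m => tup_odd _ _ _ _ _ _ m
  have hrhoodd : ∀ m, rhoT A s a b c d (extN a ai) (extN a bi) (2 * m + 5) = Yrow m := by
    intro m; rw [hrho]; exact tup_odd _ _ _ _ _ _ m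
  have hbi_eq : ∀ i : Fin n, extN a bi i.val = bi i := by
    intro i; simp [extN, i.isLt]
  apply Con.ext'
  funext p q
  apply propext
  constructor
  · -- LHS ≤ RHS
    intro h θ hθ
    have hpair : ∀ m, m < 4 + 2 * n →
        θ.rel (X m) (rhoT A s a b c d (extN a ai) (extN a bi) m) :=
      fun m hm => hθ _ ⟨m, hm, rfl⟩
    have hθ3 : θ.rel d c := by
      have := hpair 3 (by omega); rwa [hX3, hrho3] at this
    have hθy : ∀ m, m < n → θ.rel (extN a bi m) (Yrow m) := by
      intro m hm
      have := hpair (2 * m + 5) (by omega)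
      rwa [hXodd, hrhoodd] at this
    apply h θ
    rintro pr (hc | hs)
    · refine hc θ ?_
      intro pr' hpr'
      rw [show pr' = (c, d) from hpr']
      exact θ.symm _ _ hθ3
    · apply hs θ
      rintro pr' ⟨i, hi⟩
      apply hi θ
      intro pr'' hpr''
      rw [show pr'' = (bi i, evalAt A (s i) X) from hpr'']
      show θ.rel (bi i) (evalAt A (s i) X)
      have h1 : θ.rel (extN a bi i.val) (Yrow i.val) := hθy i.val i.isLt
      have h2 : θ.rel (evalAt A (s i) X) (Yrow i.val) := by
        have := key_step s a b c d (extN a ai) (extN a bi) θ hθ3 i.val i.isLt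
          (fun m hm => hθy m (lt_trans hm i.isLt))
        simpa [evalAt, Fin.eta] using this
      rw [← hbi_eq i]
      exact θ.trans _ _ _ h1 (θ.symm _ _ h2)
  · -- RHS ≤ LHS
    intro h ψ hψ
    have hcd : ψ.rel c d := by
      refine hψ (c, d) (Or.inl ?_)
      intro θ' hθ'
      exact hθ' (c, d) rfl
    have hbi' : ∀ i : Fin n, ψ.rel (bi i) (evalAt A (s i) X) := by
      intro i
      refine hψ (bi i, evalAt A (s i) X) (Or.inr ?_)
      intro θ' hθ'
      exact hθ' _ ⟨i, fun θ'' hθ'' => hθ'' _ rfl⟩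
    have hdc : ψ.rel d c := ψ.symm _ _ hcd
    have main : ∀ l, l < n → ψ.rel (extN a bi l) (Yrow l) := by
      intro l
      induction l using Nat.strong_induction_on with
      | _ l ih =>
        intro hl
        have hk := key_step s a b c d (extN a ai) (extN a bi) ψ hdc l hl
          (fun m hm => ih m hm (lt_trans hm hl))
        have hb : ψ.rel (extN a bi l) (Tm.eval A (fun i => X i.val) (s ⟨l, hl⟩)) := by
          have := hbi' ⟨l, hl⟩
          rw [← hbi_eq ⟨l, hl⟩] at this
          exact this
        exact ψ.trans _ _ _ hb hk
    apply h ψ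
    rintro pr ⟨m, hm, hpr⟩
    rw [hpr]
    show ψ.rel (X m) (rhoT A s a b c d (extN a ai) (extN a bi) m)
    rw [hrho]
    refine tup_rel n (ψ.refl a) (ψ.refl b) (ψ.refl c) hdc (fun m => ψ.refl _)
      (fun m hm => main m hm) m hm


end UA
end
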